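/- arXiv:2211.10621 — 3 statements merged into one kernel-verified Lean document; each statement's English description precedes it below -/
import Mathlib

section
/- Let k ≥ 4 be an integer, x > 1, h a nonzero integer, M ≥ 1, and M' = min(2M, (x/2)^{1/k}). Then Σ_{M < m ≤ M'} e(h(x − m^k)^{1/k}) ≪ |h|^{-1/2} x^{(k-1)/(2k)} M^{(2-k)/2} + |h|^{1/2} x^{(1-k)/(2k)} M^{k/2}, with implied constant depending only on k. -/
/-!
Van der Corput's second-derivative test for `f(t) = |h| (x - t^k)^(1/k)`. On `[M, M']` we have
`t^k ≤ x/2`, so `λ ≤ -f'' ≤ 2^k (k-1) λ` with `λ = |h| M^(k-2) x^(1/k-1)`, and by the mean value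
theorem the second differences of `m ↦ f m` obey the same bounds: the first differences `Δf m`
decrease at rate `≍ λ`. Cut the range into blocks according to the integer `ν` next to `Δf`.
Where `ν + θ ≤ Δf ≤ ν + 1 - θ`, the Kusmin–Landau inequality bounds the block sum by `1/θ`
(Abel summation against `1 / (e(Δf) - 1) = -(1 + i cot πΔf) / 2`, whose variation telescopes
because `cot` is monotone); where `Δf` is within `θ` of `ν` there are at most `2θ/λ + 1` terms.
There are `O(λN + 1)` blocks, and `θ = √λ` gives `O(N √λ + 1/√λ)` with `N ≤ 2M`, which are the
two terms of the claim. Negative `h` is reduced to positive `h` by complex conjugation.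
-/

open Finset Real

namespace VanDerCorput

open fwdDiff

noncomputable def e (t : ℝ) : ℂ := Complex.exp (2 * π * Complex.I * t)

lemma e_def (t : ℝ) : e t = Complex.exp (2 * π * Complex.I * t) := rfl

lemma norm_e (t : ℝ) : ‖e t‖ = 1 := by
  rw [e, Complex.norm_exp]
  simp

lemma e_add (s t : ℝ) : e (s + t) = e s * e t := by
  rw [e, e, e, ← Complex.exp_add]
  push_cast
  ring_nf

lemma e_add_intCast (t : ℝ) (n : ℤ) : e (t + n) = e t := by
  have : e n = 1 := by
    rw [e, show 2 * π * Complex.I * ((n : ℝ) : ℂ) = n * (2 * π * Complex.I) by push_cast; ring,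
      Complex.exp_int_mul_two_pi_mul_I]
  rw [e_add, this, mul_one]

lemma e_neg (t : ℝ) : e (-t) = starRingEnd ℂ (e t) := by
  rw [e, e, ← Complex.exp_conj]
  simp [Complex.conj_ofNat]

lemma norm_sum_e_mul_abs (s : Finset ℕ) (φ : ℕ → ℝ) (c : ℝ) :
    ‖∑ n ∈ s, e (c * φ n)‖ = ‖∑ n ∈ s, e (|c| * φ n)‖ := by
  rcases abs_choice c with hc | hc <;> rw [hc]
  simp only [neg_mul, e_neg, ← map_sum, RCLike.norm_conj]

lemma norm_e_sub_one (δ : ℝ) : ‖e δ - 1‖ = 2 * |sin (π * δ)| := by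
  rw [e, show 2 * π * Complex.I * (δ : ℂ) = Complex.I * ((2 * π * δ : ℝ) : ℂ) by push_cast; ring,
    Complex.norm_exp_I_mul_ofReal_sub_one, norm_mul, Real.norm_eq_abs, Real.norm_eq_abs,
    show 2 * π * δ / 2 = π * δ by ring]
  norm_num

lemma e_sub_one_ne_zero {δ : ℝ} (hδ : sin (π * δ) ≠ 0) : e δ - 1 ≠ 0 := by
  rw [← norm_ne_zero_iff, norm_e_sub_one]
  positivity

lemma e_sub_one_inv {δ : ℝ} (hδ : sin (π * δ) ≠ 0) :
    (e δ - 1)⁻¹ = -(1 + cot (π * δ) * Complex.I) / 2 := by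
  have hne := e_sub_one_ne_zero hδ
  have hcot := Complex.cot_pi_eq_exp_ratio δ
  rw [← Complex.ofReal_mul, ← Complex.ofReal_cot, ← e] at hcot
  have hne' : 1 - e δ ≠ 0 := by rw [← neg_sub]; exact neg_ne_zero.2 hne
  rw [hcot]
  field_simp
  ring_nf

lemma cot_le_cot {u w : ℝ} (hu : 0 < u) (huw : u ≤ w) (hw : w < π) : cot w ≤ cot u := by
  have hsu : 0 < sin u := sin_pos_of_pos_of_lt_pi hu (by linarith)
  have hsw : 0 < sin w := sin_pos_of_pos_of_lt_pi (by linarith) hw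
  rw [cot_eq_cos_div_sin, cot_eq_cos_div_sin, div_le_div_iff₀ hsw hsu]
  have : 0 ≤ sin (w - u) := sin_nonneg_of_nonneg_of_le_pi (by linarith) (by linarith)
  rw [sin_sub] at this
  linarith

lemma two_mul_le_sin_pi_mul {θ δ : ℝ} (hθ : 0 ≤ θ) (hlo : θ ≤ δ) (hhi : δ ≤ 1 - θ) :
    2 * θ ≤ sin (π * δ) := by
  have key : ∀ y, θ ≤ y → y ≤ 1 / 2 → 2 * θ ≤ sin (π * y) := fun y hy hy' => by
    have := mul_le_sin (mul_nonneg pi_pos.le (hθ.trans hy)) (by nlinarith [pi_pos])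
    rw [show 2 / π * (π * y) = 2 * y by field_simp] at this
    linarith
  rcases le_total δ (1 / 2) with h | h
  · exact key δ hlo h
  · rw [show π * δ = π - π * (1 - δ) by ring, sin_pi_sub]
    exact key (1 - δ) (by linarith) (by linarith)

lemma sum_Ico_mul_sub_eq {R : Type*} [Ring R] (u v : ℕ → R) {a c : ℕ} (h : a < c) :
    ∑ n ∈ Ico a c, v n * (u (n + 1) - u n) =
      v (c - 1) * u c - v a * u a - ∑ n ∈ Ico a (c - 1), (v (n + 1) - v n) * u (n + 1) := by
  have := sum_Ico_by_parts v (fun n => u (n + 1) - u n) h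
  simp only [smul_eq_mul, sum_range_sub] at this
  rw [this]
  simp only [mul_sub, sum_sub_distrib, ← sum_mul, sum_Ico_sub _ (by omega : a ≤ c - 1)]
  generalize ∑ n ∈ Ico a (c - 1), (v (n + 1) - v n) * u (n + 1) = S
  noncomm_ring

lemma norm_sum_mul_sub_le {R : Type*} [NormedRing R] (u v : ℕ → R) (hu : ∀ n, ‖u n‖ ≤ 1)
    {a c : ℕ} (h : a < c) :
    ‖∑ n ∈ Ico a c, v n * (u (n + 1) - u n)‖ ≤
      ‖v a‖ + ‖v (c - 1)‖ + ∑ n ∈ Ico a (c - 1), ‖v (n + 1) - v n‖ := by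
  have hmul : ∀ w : R, ∀ n, ‖w * u n‖ ≤ ‖w‖ := fun w n =>
    (norm_mul_le w (u n)).trans (mul_le_of_le_one_right (norm_nonneg w) (hu n))
  rw [sum_Ico_mul_sub_eq u v h]
  calc _ ≤ ‖v (c - 1) * u c‖ + ‖v a * u a‖ +
        ‖∑ n ∈ Ico a (c - 1), (v (n + 1) - v n) * u (n + 1)‖ :=
          norm_sub_le_of_le (norm_sub_le _ _) le_rfl
    _ ≤ ‖v (c - 1)‖ + ‖v a‖ + ∑ n ∈ Ico a (c - 1), ‖v (n + 1) - v n‖ := by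
      gcongr
      · exact hmul _ _
      · exact hmul _ _
      · exact (norm_sum_le _ _).trans (sum_le_sum fun n _ => hmul _ _)
    _ = _ := by ring

lemma e_fwdDiff (f : ℕ → ℝ) (n : ℕ) : e (f (n + 1)) = e (f n) * e (Δ_[1] f n) := by
  rw [← e_add, fwdDiff, add_sub_cancel]

lemma norm_inv_e_sub_one_le {θ δ : ℝ} (hθ : 0 < θ) (hlo : θ ≤ δ) (hhi : δ ≤ 1 - θ) :
    ‖(e δ - 1)⁻¹‖ ≤ 1 / (4 * θ) := by
  have := two_mul_le_sin_pi_mul hθ.le hlo hhi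
  rw [norm_inv, norm_e_sub_one, abs_of_pos (by linarith), ← one_div]
  exact one_div_le_one_div_of_le (by positivity) (by linarith)

lemma abs_cot_pi_mul_le {θ δ : ℝ} (hθ : 0 < θ) (hlo : θ ≤ δ) (hhi : δ ≤ 1 - θ) :
    |cot (π * δ)| ≤ 1 / (2 * θ) := by
  have := two_mul_le_sin_pi_mul hθ.le hlo hhi
  have hsin : 0 < sin (π * δ) := by linarith
  rw [cot_eq_cos_div_sin, abs_div, abs_of_pos hsin]
  calc _ ≤ 1 / sin (π * δ) := by gcongr; exact abs_cos_le_one _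
    _ ≤ 1 / (2 * θ) := by gcongr

lemma norm_inv_e_sub_one_sub {δ δ' : ℝ} (hδ : sin (π * δ) ≠ 0) (hδ' : sin (π * δ') ≠ 0) :
    ‖(e δ' - 1)⁻¹ - (e δ - 1)⁻¹‖ = |cot (π * δ) - cot (π * δ')| / 2 := by
  rw [e_sub_one_inv hδ, e_sub_one_inv hδ', show -(1 + (cot (π * δ') : ℂ) * Complex.I) / 2 -
      -(1 + cot (π * δ) * Complex.I) / 2 = ((cot (π * δ) - cot (π * δ')) / 2 : ℝ) * Complex.I by
    push_cast; ring, norm_mul, Complex.norm_I, mul_one, Complex.norm_real, Real.norm_eq_abs,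
    abs_div, abs_two]

theorem norm_sum_e_le_of_antitoneOn {f : ℕ → ℝ} {θ : ℝ} {a c : ℕ} (hθ : 0 < θ)
    (hanti : AntitoneOn (Δ_[1] f) (Set.Ico a c))
    (hmem : ∀ n ∈ Ico a c, θ ≤ Δ_[1] f n ∧ Δ_[1] f n ≤ 1 - θ) :
    ‖∑ n ∈ Ico a c, e (f n)‖ ≤ 1 / θ := by
  rcases le_or_gt c a with hca | hac
  · rw [Ico_eq_empty_of_le hca, sum_empty, norm_zero]
    positivity
  have hsin : ∀ n ∈ Ico a c, sin (π * Δ_[1] f n) ≠ 0 := fun n hn =>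
    (lt_of_lt_of_le (by positivity) (two_mul_le_sin_pi_mul hθ.le (hmem n hn).1 (hmem n hn).2)).ne'
  set r : ℕ → ℝ := fun n => cot (π * Δ_[1] f n)
  set v : ℕ → ℂ := fun n => (e (Δ_[1] f n) - 1)⁻¹
  have hv_diff : ∀ n ∈ Ico a (c - 1), ‖v (n + 1) - v n‖ = (r (n + 1) - r n) / 2 := fun n hn => by
    have hn0 : n ∈ Ico a c := by simp only [mem_Ico] at hn ⊢; omega
    have hn1 : n + 1 ∈ Ico a c := by simp only [mem_Ico] at hn ⊢; omega
    have hr : r n ≤ r (n + 1) := cot_le_cot (mul_pos pi_pos (hθ.trans_le (hmem _ hn1).1))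
      (mul_le_mul_of_nonneg_left (hanti (coe_Ico a c ▸ hn0) (coe_Ico a c ▸ hn1) n.le_succ)
        pi_pos.le) (by nlinarith [(hmem _ hn0).2, pi_pos])
    rw [norm_inv_e_sub_one_sub (hsin n hn0) (hsin _ hn1), abs_sub_comm, abs_of_nonneg (by linarith)]
  have hsum : ∑ n ∈ Ico a c, e (f n) = ∑ n ∈ Ico a c, v n * (e (f (n + 1)) - e (f n)) :=
    sum_congr rfl fun n hn => by
      rw [e_fwdDiff, ← mul_sub_one, mul_left_comm, inv_mul_cancel₀ (e_sub_one_ne_zero (hsin n hn)),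
        mul_one]
  have ha : a ∈ Ico a c := by simp only [mem_Ico]; omega
  have hc : c - 1 ∈ Ico a c := by simp only [mem_Ico]; omega
  have hra := abs_le.1 (abs_cot_pi_mul_le hθ (hmem a ha).1 (hmem a ha).2)
  have hrc := abs_le.1 (abs_cot_pi_mul_le hθ (hmem _ hc).1 (hmem _ hc).2)
  calc ‖∑ n ∈ Ico a c, e (f n)‖
      ≤ ‖v a‖ + ‖v (c - 1)‖ + ∑ n ∈ Ico a (c - 1), ‖v (n + 1) - v n‖ := by
        rw [hsum]; exact norm_sum_mul_sub_le _ v (fun n => (norm_e _).le) hac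
    _ = ‖v a‖ + ‖v (c - 1)‖ + (r (c - 1) - r a) / 2 := by
        rw [sum_congr rfl hv_diff, ← sum_div, sum_Ico_sub _ (by omega)]
    _ ≤ 1 / (4 * θ) + 1 / (4 * θ) + (1 / (2 * θ) + 1 / (2 * θ)) / 2 := by
        gcongr
        · exact norm_inv_e_sub_one_le hθ (hmem a ha).1 (hmem a ha).2
        · exact norm_inv_e_sub_one_le hθ (hmem _ hc).1 (hmem _ hc).2
        · linarith
    _ = 1 / θ := by field_simp; ring

lemma norm_sum_e_le_card (f : ℕ → ℝ) (s : Finset ℕ) : ‖∑ n ∈ s, e (f n)‖ ≤ #s := by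
  simpa [norm_e] using norm_sum_le s (fun n => e (f n))

theorem norm_sum_e_le_of_antitoneOn_of_intCast_add {f : ℕ → ℝ} {θ : ℝ} {a c : ℕ} (ν : ℤ)
    (hθ : 0 < θ) (hanti : AntitoneOn (Δ_[1] f) (Set.Ico a c))
    (hmem : ∀ n ∈ Ico a c, ν + θ ≤ Δ_[1] f n ∧ Δ_[1] f n ≤ ν + 1 - θ) :
    ‖∑ n ∈ Ico a c, e (f n)‖ ≤ 1 / θ := by
  set g : ℕ → ℝ := fun n => f n + (-ν * n : ℤ)
  have hg : Δ_[1] g = fun n => Δ_[1] f n - ν := by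
    ext n; simp only [g, fwdDiff]; push_cast; ring
  have key := norm_sum_e_le_of_antitoneOn (f := g) (a := a) (c := c) hθ
    (by rw [hg]; exact fun m hm n hn hmn => sub_le_sub_right (hanti hm hn hmn) _)
    (fun n hn => by rw [hg]; constructor <;> linarith [hmem n hn])
  simpa only [g, e_add_intCast] using key

lemma mul_le_sub_of_le_sub_succ (g : ℕ → ℝ) {C : ℝ} {m n : ℕ} (hmn : m ≤ n)
    (h : ∀ i ∈ Ico m n, C ≤ g i - g (i + 1)) : C * (n - m) ≤ g m - g n := by
  have hsum := sum_Ico_sub (fun i => -g i) hmn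
  simp only [neg_sub_neg] at hsum
  have := card_nsmul_le_sum (Ico m n) (fun i => g i - g (i + 1)) C h
  rwa [hsum, Nat.card_Ico, nsmul_eq_mul, Nat.cast_sub hmn, mul_comm] at this

lemma sub_le_mul_of_sub_succ_le (g : ℕ → ℝ) {C : ℝ} {m n : ℕ} (hmn : m ≤ n)
    (h : ∀ i ∈ Ico m n, g i - g (i + 1) ≤ C) : g m - g n ≤ C * (n - m) := by
  have := mul_le_sub_of_le_sub_succ (fun i => -g i) hmn (C := -C)
    (fun i hi => by linarith [h i hi])
  linarith

lemma exists_split_of_antitoneOn {α : Type*} [LinearOrder α] {g : ℕ → α} {a b : ℕ} (hab : a ≤ b)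
    (hg : AntitoneOn g (Set.Ico a b)) (y : α) :
    ∃ m, a ≤ m ∧ m ≤ b ∧ (∀ n ∈ Ico a m, y ≤ g n) ∧ ∀ n ∈ Ico m b, g n < y := by
  have hP : ∃ n, a ≤ n ∧ (b ≤ n ∨ g n < y) := ⟨b, hab, Or.inl le_rfl⟩
  obtain ⟨ham, hm⟩ : a ≤ Nat.find hP ∧ (b ≤ Nat.find hP ∨ g (Nat.find hP) < y) :=
    Nat.find_spec hP
  refine ⟨Nat.find hP, ham, Nat.find_le ⟨hab, Or.inl le_rfl⟩, fun n hn => ?_, fun n hn => ?_⟩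
  · rw [mem_Ico] at hn
    have := Nat.find_min hP hn.2
    simp only [not_and, not_or, not_le, not_lt] at this
    exact (this hn.1).2
  · rw [mem_Ico] at hn
    rcases hm with hm | hm
    · omega
    · exact (hg ⟨ham, by omega⟩ ⟨by omega, hn.2⟩ hn.1).trans_lt hm

section SecondDifferences

variable {f : ℕ → ℝ} {lam : ℝ} {a b : ℕ}

lemma mul_le_fwdDiff_sub (hstep : ∀ n ∈ Ico a (b - 1), lam ≤ Δ_[1] f n - Δ_[1] f (n + 1))
    {m n : ℕ} (ham : a ≤ m) (hmn : m ≤ n) (hnb : n < b) :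
    lam * (n - m) ≤ Δ_[1] f m - Δ_[1] f n :=
  mul_le_sub_of_le_sub_succ _ hmn fun i hi => hstep i (by simp only [mem_Ico] at hi ⊢; omega)

lemma antitoneOn_fwdDiff (hlam : 0 ≤ lam)
    (hstep : ∀ n ∈ Ico a (b - 1), lam ≤ Δ_[1] f n - Δ_[1] f (n + 1)) :
    AntitoneOn (Δ_[1] f) (Set.Ico a b) := fun m hm n hn hmn => by
  have := mul_le_fwdDiff_sub hstep hm.1 hmn hn.2
  have : (0 : ℝ) ≤ lam * (n - m) := mul_nonneg hlam (by simp [hmn])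
  linarith

lemma card_Ico_le_of_le_fwdDiff_of_fwdDiff_lt {θ y : ℝ} (hθ : 0 ≤ θ) (hlam : 0 < lam)
    (hstep : ∀ n ∈ Ico a (b - 1), lam ≤ Δ_[1] f n - Δ_[1] f (n + 1)) {m c : ℕ} (ham : a ≤ m)
    (hcb : c ≤ b) (hlo : ∀ n ∈ Ico m c, y - θ ≤ Δ_[1] f n)
    (hhi : ∀ n ∈ Ico m c, Δ_[1] f n < y + θ) :
    (#(Ico m c) : ℝ) ≤ 2 * θ / lam + 1 := by
  rw [Nat.card_Ico]
  rcases le_or_gt c m with hcm | hmc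
  · rw [Nat.sub_eq_zero_of_le hcm, Nat.cast_zero]
    positivity
  have hdrop := mul_le_fwdDiff_sub hstep ham (by omega : m ≤ c - 1) (by omega)
  have hm := hhi m (by simp only [mem_Ico]; omega)
  have hc := hlo (c - 1) (by simp only [mem_Ico]; omega)
  rw [Nat.cast_sub (by omega : 1 ≤ c), Nat.cast_one] at hdrop
  rw [Nat.cast_sub hmc.le, ← sub_le_iff_le_add, le_div_iff₀ hlam]
  linarith

lemma exists_block {θ : ℝ} (hθ : 0 < θ) (hlam : 0 < lam) (hab : a < b)
    (hstep : ∀ n ∈ Ico a (b - 1), lam ≤ Δ_[1] f n - Δ_[1] f (n + 1)) :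
    ∃ c, a < c ∧ c ≤ b ∧ ‖∑ n ∈ Ico a c, e (f n)‖ ≤ 1 / θ + 2 * θ / lam + 1 ∧
      (c < b → ⌊Δ_[1] f c + θ⌋ < ⌊Δ_[1] f a + θ⌋) := by
  have hanti := antitoneOn_fwdDiff hlam.le hstep
  -- The block is `[a, m) ∪ [m, c)`: Kusmin–Landau on `[a, m)`, where `Δf ∈ [ν + θ, ν + 1 - θ]`,
  -- and a short stretch `[m, c)` where `Δf` is within `θ` of `ν`.
  set ν := ⌊Δ_[1] f a + θ⌋
  have hν := Int.floor_le (Δ_[1] f a + θ)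
  have hν' := Int.lt_floor_add_one (Δ_[1] f a + θ)
  obtain ⟨m, ham, hmb, hgood, hlow⟩ := exists_split_of_antitoneOn hab.le hanti (ν + θ)
  obtain ⟨c, hmc, hcb, hmid, hbot⟩ := exists_split_of_antitoneOn hmb
    (hanti.mono (Set.Ico_subset_Ico_left ham)) (ν - θ)
  have hac : a < c := by
    by_contra! hca
    have := hbot a (by simp only [mem_Ico]; omega)
    linarith
  refine ⟨c, hac, hcb, ?_, fun hc => Int.floor_lt.2 ?_⟩
  · have hgood_sum : ‖∑ n ∈ Ico a m, e (f n)‖ ≤ 1 / θ := by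
      refine norm_sum_e_le_of_antitoneOn_of_intCast_add ν hθ
        (hanti.mono (Set.Ico_subset_Ico_right hmb)) fun n hn => ⟨hgood n hn, ?_⟩
      rw [mem_Ico] at hn
      have := hanti ⟨le_rfl, hab⟩ ⟨hn.1, by omega⟩ hn.1
      linarith
    have hbad_sum : ‖∑ n ∈ Ico m c, e (f n)‖ ≤ 2 * θ / lam + 1 :=
      (norm_sum_e_le_card f _).trans (card_Ico_le_of_le_fwdDiff_of_fwdDiff_lt hθ.le hlam hstep
        ham hcb hmid fun n hn => hlow n (by simp only [mem_Ico] at hn ⊢; omega))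
    rw [← sum_Ico_consecutive _ ham hmc]
    calc _ ≤ ‖∑ n ∈ Ico a m, e (f n)‖ + ‖∑ n ∈ Ico m c, e (f n)‖ := norm_add_le _ _
      _ ≤ 1 / θ + 2 * θ / lam + 1 := by linarith
  · have := hbot c (by simp only [mem_Ico]; omega)
    linarith

lemma norm_sum_e_le_floor_mul {θ : ℝ} (hθ : 0 < θ) (hlam : 0 < lam) (hab : a < b)
    (hstep : ∀ n ∈ Ico a (b - 1), lam ≤ Δ_[1] f n - Δ_[1] f (n + 1)) :
    ‖∑ n ∈ Ico a b, e (f n)‖ ≤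
      ((⌊Δ_[1] f a + θ⌋ - ⌊Δ_[1] f (b - 1) + θ⌋ + 1 : ℤ) : ℝ) * (1 / θ + 2 * θ / lam + 1) := by
  induction h : b - a using Nat.strong_induction_on generalizing a with
  | _ N ih =>
  obtain ⟨c, hac, hcb, hblock, hfloor⟩ := exists_block hθ hlam hab hstep
  have hP : 0 ≤ 1 / θ + 2 * θ / lam + 1 := by positivity
  have hfloor_mono : ∀ n ∈ Set.Ico a b, ⌊Δ_[1] f (b - 1) + θ⌋ ≤ ⌊Δ_[1] f n + θ⌋ := fun n hn => by
    have := antitoneOn_fwdDiff hlam.le hstep hn (⟨by omega, by omega⟩ : b - 1 ∈ Set.Ico a b)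
      (by have := hn.2; omega)
    exact Int.floor_le_floor (by linarith)
  rcases hcb.eq_or_lt with rfl | hcb
  · refine hblock.trans (le_mul_of_one_le_left hP ?_)
    exact_mod_cast (by linarith [hfloor_mono a ⟨le_rfl, hab⟩])
  · have hrest := ih (b - c) (by omega) hcb
      (fun n hn => hstep n (by simp only [mem_Ico] at hn ⊢; omega)) rfl
    have hcount : (⌊Δ_[1] f c + θ⌋ - ⌊Δ_[1] f (b - 1) + θ⌋ + 1 : ℤ) + 1 ≤
        ⌊Δ_[1] f a + θ⌋ - ⌊Δ_[1] f (b - 1) + θ⌋ + 1 := by linarith [hfloor hcb]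
    rw [← sum_Ico_consecutive _ hac.le hcb.le]
    calc _ ≤ ‖∑ n ∈ Ico a c, e (f n)‖ + ‖∑ n ∈ Ico c b, e (f n)‖ := norm_add_le _ _
      _ ≤ (((⌊Δ_[1] f c + θ⌋ - ⌊Δ_[1] f (b - 1) + θ⌋ + 1 : ℤ) : ℝ) + 1) *
          (1 / θ + 2 * θ / lam + 1) := by linarith
      _ ≤ _ := by gcongr; exact_mod_cast hcount

theorem norm_sum_e_Ico_le_of_second_diff {θ K : ℝ} (hθ : 0 < θ) (hlam : 0 < lam) (hK : 0 ≤ K)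
    (h : ∀ n ∈ Ico a (b - 1),
      lam ≤ Δ_[1] f n - Δ_[1] f (n + 1) ∧ Δ_[1] f n - Δ_[1] f (n + 1) ≤ K * lam) :
    ‖∑ n ∈ Ico a b, e (f n)‖ ≤ (K * lam * (b - a : ℕ) + 2) * (1 / θ + 2 * θ / lam + 1) := by
  rcases le_or_gt b a with hba | hab
  · rw [Ico_eq_empty_of_le hba, sum_empty, norm_zero]
    positivity
  refine (norm_sum_e_le_floor_mul hθ hlam hab fun n hn => (h n hn).1).trans
    (mul_le_mul_of_nonneg_right ?_ (by positivity))
  have hD := sub_le_mul_of_sub_succ_le (Δ_[1] f) (m := a) (n := b - 1) (by omega)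
    fun i hi => (h i hi).2
  have hN : ((b - 1 : ℕ) : ℝ) - a ≤ (b - a : ℕ) := by
    rw [sub_le_iff_le_add]; exact_mod_cast (by omega : b - 1 ≤ b - a + a)
  have := mul_le_mul_of_nonneg_left hN (mul_nonneg hK hlam.le)
  push_cast
  linarith [Int.floor_le (Δ_[1] f a + θ), Int.lt_floor_add_one (Δ_[1] f (b - 1) + θ)]

lemma norm_sum_e_Ioc_le (f : ℕ → ℝ) (a b : ℕ) :
    ‖∑ n ∈ Ioc a b, e (f n)‖ ≤ ‖∑ n ∈ Ico (a + 1) b, e (f n)‖ + 1 := by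
  rcases le_or_gt b a with hba | hab
  · rw [Ioc_eq_empty_of_le hba, sum_empty, norm_zero]
    positivity
  obtain ⟨b, rfl⟩ : ∃ b', b = b' + 1 := ⟨b - 1, by omega⟩
  rw [← Ico_add_one_add_one_eq_Ioc, sum_Ico_succ_top (by omega)]
  exact (norm_add_le _ _).trans (by rw [norm_e])

theorem norm_sum_e_Ioc_le_of_second_diff {K : ℝ} (hlam : 0 < lam) (hK : 0 ≤ K)
    (h : ∀ n ∈ Ico (a + 1) (b - 1),
      lam ≤ Δ_[1] f n - Δ_[1] f (n + 1) ∧ Δ_[1] f n - Δ_[1] f (n + 1) ≤ K * lam) :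
    ‖∑ n ∈ Ioc a b, e (f n)‖ ≤ (4 * K + 9) * ((b - a : ℕ) * √lam + 1 / √lam) := by
  obtain ⟨θ, hθ, rfl⟩ : ∃ θ, 0 < θ ∧ lam = θ ^ 2 := ⟨√lam, by positivity, (sq_sqrt hlam.le).symm⟩
  rw [sqrt_sq hθ.le]
  set N : ℝ := ((b - a : ℕ) : ℝ)
  rcases lt_or_ge (1 / 2) θ with hθ_large | hθ_small
  · calc _ ≤ N := by simpa using norm_sum_e_le_card f (Ioc a b)
      _ ≤ (4 * K + 9) * (N * θ) := by
        have hN0 : 0 ≤ N := Nat.cast_nonneg _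
        nlinarith [mul_le_mul_of_nonneg_left hθ_large.le hN0]
      _ ≤ _ := by gcongr; exact le_add_of_nonneg_right (by positivity)
  have hu : 2 ≤ 1 / θ := by rw [le_div_iff₀ hθ]; linarith
  have hP : 1 / θ + 2 * θ / θ ^ 2 + 1 ≤ 7 / 2 * (1 / θ) := by
    rw [show 2 * θ / θ ^ 2 = 2 * (1 / θ) by field_simp]
    linarith
  have hN : ((b - (a + 1) : ℕ) : ℝ) ≤ N := Nat.cast_le.2 (by omega)
  have : 0 ≤ K * N * θ := by positivity
  have : 0 ≤ K * (1 / θ) := by positivity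
  calc _ ≤ ‖∑ n ∈ Ico (a + 1) b, e (f n)‖ + 1 := norm_sum_e_Ioc_le f a b
    _ ≤ (K * θ ^ 2 * N + 2) * (7 / 2 * (1 / θ)) + 1 := by
        gcongr
        exact (norm_sum_e_Ico_le_of_second_diff hθ hlam hK h).trans (by gcongr)
    _ = 7 / 2 * (K * N * θ) + 7 * (1 / θ) + 1 := by field_simp
    _ ≤ (4 * K + 9) * (N * θ + 1 / θ) := by nlinarith

end SecondDifferences

lemma exists_second_diff_eq {f f' f'' : ℝ → ℝ} {u : ℝ}
    (hf : ∀ t ∈ Set.Icc u (u + 2), HasDerivAt f (f' t) t)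
    (hf' : ∀ t ∈ Set.Icc u (u + 2), HasDerivAt f' (f'' t) t) :
    ∃ η ∈ Set.Ioo u (u + 2), f (u + 2) - 2 * f (u + 1) + f u = f'' η := by
  have hG : ∀ t ∈ Set.Icc u (u + 1),
      HasDerivAt (fun t => f (t + 1) - f t) (f' (t + 1) - f' t) t := fun t ht =>
    ((hf (t + 1) ⟨by linarith [ht.1], by linarith [ht.2]⟩).comp_add_const t 1).sub
      (hf t ⟨ht.1, by linarith [ht.2]⟩)
  obtain ⟨s, hs, hs_eq⟩ := exists_hasDerivAt_eq_slope _ _ (by linarith : u < u + 1)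
    (fun t ht => (hG t ht).continuousAt.continuousWithinAt)
    (fun t ht => hG t (Set.Ioo_subset_Icc_self ht))
  have hsub : Set.Icc s (s + 1) ⊆ Set.Icc u (u + 2) := Set.Icc_subset_Icc (by linarith [hs.1])
    (by linarith [hs.2])
  obtain ⟨η, hη, hη_eq⟩ := exists_hasDerivAt_eq_slope f' f'' (by linarith : s < s + 1)
    (fun t ht => (hf' t (hsub ht)).continuousAt.continuousWithinAt)
    (fun t ht => hf' t (hsub (Set.Ioo_subset_Icc_self ht)))
  refine ⟨η, ⟨by linarith [hs.1, hη.1], by linarith [hs.2, hη.2]⟩, ?_⟩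
  rw [hη_eq, add_sub_cancel_left, div_one, hs_eq, add_sub_cancel_left, div_one, add_assoc,
    one_add_one_eq_two]
  ring

section RootPhase

variable {k : ℕ} {x t : ℝ}

lemma hasDerivAt_rpow_sub_pow (hk : k ≠ 0) (ht : 0 < x - t ^ k) :
    HasDerivAt (fun t => (x - t ^ k) ^ ((1 : ℝ) / k))
      (-(t ^ (k - 1) * (x - t ^ k) ^ ((1 : ℝ) / k - 1))) t := by
  have := ((hasDerivAt_pow k t).const_sub x).rpow_const (p := (1 : ℝ) / k) (Or.inl ht.ne')
  convert this using 1
  field_simp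

lemma hasDerivAt_pow_mul_rpow_sub_pow (hk : 2 ≤ k) (ht : 0 < x - t ^ k) :
    HasDerivAt (fun t => -(t ^ (k - 1) * (x - t ^ k) ^ ((1 : ℝ) / k - 1)))
      (-((k - 1) * t ^ (k - 2) * x * (x - t ^ k) ^ ((1 : ℝ) / k - 2))) t := by
  have := ((hasDerivAt_pow (k - 1) t).mul
    (((hasDerivAt_pow k t).const_sub x).rpow_const (p := (1 : ℝ) / k - 1) (Or.inl ht.ne'))).neg
  refine this.congr_deriv ?_
  have hkinv : (k : ℝ) * (1 / k) = 1 := mul_one_div_cancel (by positivity)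
  have hpow : t ^ (k - 1) * t ^ (k - 1) = t ^ (k - 2) * t ^ k := by
    rw [← pow_add, ← pow_add]; congr 1; omega
  have hrpow : (x - t ^ k) ^ ((1 : ℝ) / k - 1) = (x - t ^ k) ^ ((1 : ℝ) / k - 2) * (x - t ^ k) := by
    rw [← rpow_add_one ht.ne']; ring_nf
  rw [show (1 : ℝ) / k - 1 - 1 = 1 / k - 2 by ring, show k - 1 - 1 = k - 2 by omega, hrpow,
    Nat.cast_sub (by omega : 1 ≤ k)]
  linear_combination t ^ (k - 1) * t ^ (k - 1) * (x - t ^ k) ^ ((1 : ℝ) / k - 2) * hkinv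
    - (k - 1 : ℝ) * (x - t ^ k) ^ ((1 : ℝ) / k - 2) * hpow

lemma pow_mul_rpow_sub_pow_mem_Icc {M : ℝ} (hk : 2 ≤ k) (hx : 0 < x) (hM : 0 ≤ M) (hMt : M ≤ t)
    (htM : t ≤ 2 * M) (htx : t ^ k ≤ x / 2) :
    (k - 1) * t ^ (k - 2) * x * (x - t ^ k) ^ ((1 : ℝ) / k - 2) ∈
      Set.Icc (M ^ (k - 2) * x ^ ((1 : ℝ) / k - 1))
        (2 ^ k * (k - 1) * (M ^ (k - 2) * x ^ ((1 : ℝ) / k - 1))) := by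
  have hk1 : (1 : ℝ) ≤ k - 1 := by
    have : (2 : ℝ) ≤ k := by exact_mod_cast hk
    linarith
  have hp : (1 : ℝ) / k - 2 ≤ 0 := by
    have : (1 : ℝ) / k ≤ 1 :=
      div_le_one_of_le₀ (by exact_mod_cast (by omega : 1 ≤ k)) (by positivity)
    linarith
  have ht : 0 ≤ t := hM.trans hMt
  have hX : x / 2 ≤ x - t ^ k := by linarith
  have hXx : x - t ^ k ≤ x := by linarith [pow_nonneg ht k]
  have hxp : x ^ ((1 : ℝ) / k - 1) = x * x ^ ((1 : ℝ) / k - 2) := by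
    rw [mul_comm, ← rpow_add_one hx.ne']; ring_nf
  have hX_lo : x ^ ((1 : ℝ) / k - 2) ≤ (x - t ^ k) ^ ((1 : ℝ) / k - 2) :=
    rpow_le_rpow_of_nonpos (by linarith) hXx hp
  have hX_hi : (x - t ^ k) ^ ((1 : ℝ) / k - 2) ≤ 4 * x ^ ((1 : ℝ) / k - 2) := by
    calc _ ≤ (x / 2) ^ ((1 : ℝ) / k - 2) := rpow_le_rpow_of_nonpos (by positivity) hX hp
      _ = 2 ^ (-((1 : ℝ) / k - 2)) * x ^ ((1 : ℝ) / k - 2) := by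
        rw [div_rpow hx.le zero_le_two, rpow_neg zero_le_two, div_eq_inv_mul]
      _ ≤ 2 ^ (2 : ℝ) * x ^ ((1 : ℝ) / k - 2) := by
        gcongr
        · exact one_le_two
        · linarith [show (0 : ℝ) ≤ 1 / k by positivity]
      _ = 4 * x ^ ((1 : ℝ) / k - 2) := by norm_num
  have h2k : (2 : ℝ) ^ k = 2 ^ (k - 2) * 4 := by
    rw [show (4 : ℝ) = 2 ^ 2 by norm_num, ← pow_add, Nat.sub_add_cancel hk]
  rw [hxp]
  constructor
  · calc M ^ (k - 2) * (x * x ^ ((1 : ℝ) / k - 2))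
        ≤ 1 * t ^ (k - 2) * x * (x - t ^ k) ^ ((1 : ℝ) / k - 2) := by
          rw [one_mul, mul_assoc]; gcongr
      _ ≤ _ := by
          have : 0 ≤ (x - t ^ k) ^ ((1 : ℝ) / k - 2) := rpow_nonneg (by linarith) _
          gcongr
  · calc _ ≤ (k - 1) * (2 * M) ^ (k - 2) * x * (4 * x ^ ((1 : ℝ) / k - 2)) := by
          gcongr; linarith
      _ = _ := by rw [mul_pow, h2k]; ring

lemma fwdDiff_sub_fwdDiff_rpow_sub_pow_mem_Icc {c M : ℝ} (hk : 2 ≤ k) (hx : 0 < x) (hc : 0 ≤ c)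
    (hM : 0 ≤ M) {n : ℕ} (hMn : M ≤ n) (hnM : (n : ℝ) + 2 ≤ 2 * M)
    (hnx : ((n : ℝ) + 2) ^ k ≤ x / 2) :
    Δ_[1] (fun m : ℕ => c * (x - (m : ℝ) ^ k) ^ ((1 : ℝ) / k)) n -
        Δ_[1] (fun m : ℕ => c * (x - (m : ℝ) ^ k) ^ ((1 : ℝ) / k)) (n + 1) ∈
      Set.Icc (c * M ^ (k - 2) * x ^ ((1 : ℝ) / k - 1))
        (2 ^ k * (k - 1) * (c * M ^ (k - 2) * x ^ ((1 : ℝ) / k - 1))) := by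
  have hpow : ∀ t ∈ Set.Icc (n : ℝ) (n + 2), t ^ k ≤ x / 2 := fun t ht =>
    (pow_le_pow_left₀ ((Nat.cast_nonneg n).trans ht.1) ht.2 k).trans hnx
  have hpos : ∀ t ∈ Set.Icc (n : ℝ) (n + 2), 0 < x - t ^ k := fun t ht => by
    linarith [hpow t ht]
  obtain ⟨η, hη, hη_eq⟩ := exists_second_diff_eq
    (fun t ht => hasDerivAt_rpow_sub_pow (by omega) (hpos t ht))
    (fun t ht => hasDerivAt_pow_mul_rpow_sub_pow hk (hpos t ht))
  have hmem := pow_mul_rpow_sub_pow_mem_Icc hk hx hM (hMn.trans hη.1.le) (by linarith [hη.2])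
    (hpow η (Set.Ioo_subset_Icc_self hη))
  have hdiff : Δ_[1] (fun m : ℕ => c * (x - (m : ℝ) ^ k) ^ ((1 : ℝ) / k)) n -
      Δ_[1] (fun m : ℕ => c * (x - (m : ℝ) ^ k) ^ ((1 : ℝ) / k)) (n + 1) =
      c * ((k - 1) * η ^ (k - 2) * x * (x - η ^ k) ^ ((1 : ℝ) / k - 2)) := by
    simp only [fwdDiff, Nat.cast_add, Nat.cast_one]
    rw [show (n : ℝ) + 1 + 1 = n + 2 by ring]
    linear_combination -c * hη_eq
  rw [hdiff, mul_assoc c, mul_left_comm _ c]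
  exact ⟨mul_le_mul_of_nonneg_left hmem.1 hc, mul_le_mul_of_nonneg_left hmem.2 hc⟩

lemma fwdDiff_sub_fwdDiff_rpow_sub_pow_mem_Icc_of_mem_Ico {c M : ℝ} (hk : 2 ≤ k) (hx : 0 < x)
    (hc : 0 ≤ c) (hM : 0 ≤ M) {n : ℕ}
    (hn : n ∈ Ico (⌊M⌋₊ + 1) (⌊min (2 * M) ((x / 2) ^ ((1 : ℝ) / k))⌋₊ - 1)) :
    Δ_[1] (fun m : ℕ => c * (x - (m : ℝ) ^ k) ^ ((1 : ℝ) / k)) n -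
        Δ_[1] (fun m : ℕ => c * (x - (m : ℝ) ^ k) ^ ((1 : ℝ) / k)) (n + 1) ∈
      Set.Icc (c * M ^ (k - 2) * x ^ ((1 : ℝ) / k - 1))
        (2 ^ k * (k - 1) * (c * M ^ (k - 2) * x ^ ((1 : ℝ) / k - 1))) := by
  obtain ⟨hn1, hn2⟩ := mem_Ico.1 hn
  have hM' : 0 ≤ min (2 * M) ((x / 2) ^ ((1 : ℝ) / k)) := le_min (by linarith) (by positivity)
  have hnM' : (n : ℝ) + 2 ≤ min (2 * M) ((x / 2) ^ ((1 : ℝ) / k)) :=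
    le_trans (by exact_mod_cast (by omega : n + 2 ≤ ⌊min (2 * M) ((x / 2) ^ ((1 : ℝ) / k))⌋₊))
      (Nat.floor_le hM')
  have hroot : ((x / 2) ^ ((1 : ℝ) / k)) ^ k = x / 2 := by
    rw [one_div, rpow_inv_natCast_pow (by positivity) (by omega)]
  exact fwdDiff_sub_fwdDiff_rpow_sub_pow_mem_Icc hk hx hc hM
    ((Nat.lt_floor_add_one M).le.trans (by exact_mod_cast hn1)) (hnM'.trans (min_le_left _ _))
    ((pow_le_pow_left₀ (by positivity) (hnM'.trans (min_le_right _ _)) k).trans hroot.le)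

lemma rpow_mul_pow_mul_rpow {c M : ℝ} (hk : 2 ≤ k) (hc : 0 ≤ c) (hM : 0 ≤ M) (hx : 0 ≤ x)
    (s : ℝ) : (c * M ^ (k - 2) * x ^ ((1 : ℝ) / k - 1)) ^ s =
      c ^ s * M ^ (((k : ℝ) - 2) * s) * x ^ (((1 : ℝ) / k - 1) * s) := by
  rw [mul_rpow (by positivity) (by positivity), mul_rpow hc (by positivity),
    ← rpow_natCast, ← rpow_mul hM, ← rpow_mul hx, Nat.cast_sub hk, Nat.cast_ofNat]

lemma mul_sqrt_mul_pow_mul_rpow {c M : ℝ} (hk : 2 ≤ k) (hc : 0 < c) (hM : 0 < M) (hx : 0 < x) :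
    M * √(c * M ^ (k - 2) * x ^ ((1 : ℝ) / k - 1)) =
      c ^ ((1 : ℝ) / 2) * x ^ ((1 - (k : ℝ)) / (2 * k)) * M ^ ((k : ℝ) / 2) := by
  have hk0 : (k : ℝ) ≠ 0 := by positivity
  rw [sqrt_eq_rpow, rpow_mul_pow_mul_rpow hk hc.le hM.le hx.le,
    show ((1 : ℝ) / k - 1) * (1 / 2) = (1 - k) / (2 * k) by field_simp,
    show (k : ℝ) / 2 = ((k : ℝ) - 2) * (1 / 2) + 1 by ring, rpow_add_one hM.ne']
  ring

lemma one_div_sqrt_mul_pow_mul_rpow {c M : ℝ} (hk : 2 ≤ k) (hc : 0 < c) (hM : 0 < M)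
    (hx : 0 < x) : 1 / √(c * M ^ (k - 2) * x ^ ((1 : ℝ) / k - 1)) =
      c ^ (-(1 : ℝ) / 2) * x ^ (((k : ℝ) - 1) / (2 * k)) * M ^ ((2 - (k : ℝ)) / 2) := by
  have hk0 : (k : ℝ) ≠ 0 := by positivity
  rw [sqrt_eq_rpow, one_div, ← rpow_neg (by positivity), rpow_mul_pow_mul_rpow hk hc.le hM.le hx.le,
    show ((1 : ℝ) / k - 1) * -(1 / 2) = (k - 1) / (2 * k) by field_simp; ring,
    show ((k : ℝ) - 2) * -(1 / 2) = (2 - k) / 2 by ring, show -((1 : ℝ) / 2) = -1 / 2 by ring]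
  ring

end RootPhase

end VanDerCorput

open VanDerCorput

theorem stmt5 (k : ℕ) (hk : 4 ≤ k) : ∃ C : ℝ, 0 < C ∧
    ∀ (x : ℝ) (h : ℤ) (M : ℝ), 1 < x → h ≠ 0 → 1 ≤ M →
    ‖∑ m ∈ Finset.Ioc ⌊M⌋₊ ⌊min (2 * M) ((x / 2) ^ ((1 : ℝ) / k))⌋₊,
        Complex.exp (2 * Real.pi * Complex.I *
          (((h : ℝ) * (x - (m : ℝ) ^ k) ^ ((1 : ℝ) / k) : ℝ) : ℂ))‖ ≤
      C * (|(h : ℝ)| ^ (-(1 : ℝ) / 2) * x ^ (((k : ℝ) - 1) / (2 * k)) *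
            M ^ ((2 - (k : ℝ)) / 2) +
          |(h : ℝ)| ^ ((1 : ℝ) / 2) * x ^ ((1 - (k : ℝ)) / (2 * k)) * M ^ ((k : ℝ) / 2)) := by
  have hk2 : 2 ≤ k := by omega
  have hK : 0 ≤ 2 ^ k * ((k : ℝ) - 1) := by
    have : (2 : ℝ) ≤ k := by exact_mod_cast hk2
    exact mul_nonneg (by positivity) (by linarith)
  refine ⟨2 * (4 * (2 ^ k * (k - 1)) + 9), by positivity, fun x h M hx hh hM => ?_⟩
  have hx0 : 0 < x := by linarith
  have hM0 : 0 < M := by linarith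
  have hc : 0 < |(h : ℝ)| := abs_pos.2 (Int.cast_ne_zero.2 hh)
  have hN : ((⌊min (2 * M) ((x / 2) ^ ((1 : ℝ) / k))⌋₊ - ⌊M⌋₊ : ℕ) : ℝ) ≤ 2 * M :=
    (Nat.cast_le.2 (Nat.sub_le _ _)).trans
      ((Nat.floor_le (le_min (by linarith) (by positivity))).trans (min_le_left _ _))
  simp only [← e_def]
  rw [norm_sum_e_mul_abs, ← mul_sqrt_mul_pow_mul_rpow hk2 hc hM0 hx0,
    ← one_div_sqrt_mul_pow_mul_rpow hk2 hc hM0 hx0]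
  refine (norm_sum_e_Ioc_le_of_second_diff (by positivity) hK fun n hn =>
    fwdDiff_sub_fwdDiff_rpow_sub_pow_mem_Icc_of_mem_Ico hk2 hx0 hc.le hM0.le hn).trans ?_
  set s := √(|(h : ℝ)| * M ^ (k - 2) * x ^ ((1 : ℝ) / k - 1))
  have : 0 ≤ (4 * (2 ^ k * ((k : ℝ) - 1)) + 9) * (1 / s) := by positivity
  calc _ ≤ (4 * (2 ^ k * ((k : ℝ) - 1)) + 9) * (2 * M * s + 1 / s) := by gcongr
    _ ≤ _ := by linarith
end

section
/- Let k ≥ 4 be an integer, x > 0, h ≠ 0 an integer, and f(α) = h(x − α^k)^{1/k} for 0 < α < x^{1/k}. Then f''(α) = −(k−1) h x α^{k−2} (x − α^k)^{1/k − 2}, and for M ≤ α ≤ min(2M, (x/2)^{1/k}) one has (k−1)|h| x^{1/k − 1} M^{k−2} ≤ |f''(α)| ≤ 2^{k − 1/k} (k−1)|h| x^{1/k − 1} M^{k−2}. -/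
/-! Write `u = x - α ^ k`. Differentiating `f' = -h α ^ (k - 1) u ^ (1/k - 1)` once more gives
`f'' = -h α ^ (k - 2) u ^ (1/k - 2) ((k - 1) u + (k - 1) α ^ k)`, and `u + α ^ k = x`.
When `α ^ k ≤ x / 2` we have `x / 2 ≤ u ≤ x`, so, the exponent `1/k - 2` being negative,
`u ^ (1/k - 2)` lies between `x ^ (1/k - 2)` and `(x / 2) ^ (1/k - 2)`; together with
`M ≤ α ≤ 2 M` this bounds `|f''|` on both sides. -/

open Real Filter Topology

lemma le_rpow_one_div_iff_pow_le {a y : ℝ} {k : ℕ} (ha : 0 ≤ a) (hy : 0 ≤ y) (hk : k ≠ 0) :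
    a ≤ y ^ ((1 : ℝ) / k) ↔ a ^ k ≤ y := by
  rw [one_div, le_rpow_inv_iff_of_pos ha hy (by positivity), rpow_natCast]

lemma lt_rpow_one_div_iff_pow_lt {a y : ℝ} {k : ℕ} (ha : 0 ≤ a) (hy : 0 ≤ y) (hk : k ≠ 0) :
    a < y ^ ((1 : ℝ) / k) ↔ a ^ k < y := by
  rw [one_div, lt_rpow_inv_iff_of_pos ha hy (by positivity), rpow_natCast]

lemma hasDerivAt_sub_pow_rpow (x p : ℝ) (k : ℕ) {β : ℝ} (hβ : 0 < x - β ^ k) :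
    HasDerivAt (fun α : ℝ => (x - α ^ k) ^ p)
      (-(k * p) * β ^ (k - 1) * (x - β ^ k) ^ (p - 1)) β :=
  (((hasDerivAt_pow k β).const_sub x).rpow_const (Or.inl hβ.ne')).congr_deriv (by ring)

lemma hasDerivAt_const_mul_sub_pow_rpow_one_div (c x : ℝ) {k : ℕ} (hk : k ≠ 0) {β : ℝ}
    (hβ : 0 < x - β ^ k) :
    HasDerivAt (fun α : ℝ => c * (x - α ^ k) ^ ((1 : ℝ) / k))
      (-c * β ^ (k - 1) * (x - β ^ k) ^ ((1 : ℝ) / k - 1)) β := by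
  refine ((hasDerivAt_sub_pow_rpow x ((1 : ℝ) / k) k hβ).const_mul c).congr_deriv ?_
  rw [mul_one_div_cancel (Nat.cast_ne_zero.2 hk)]
  ring

lemma deriv_deriv_const_mul_sub_pow_rpow_one_div (c x : ℝ) {k : ℕ} (hk : 2 ≤ k) {α : ℝ}
    (hα : 0 < x - α ^ k) :
    deriv (deriv fun α : ℝ => c * (x - α ^ k) ^ ((1 : ℝ) / k)) α =
      -((k : ℝ) - 1) * c * x * α ^ (k - 2) * (x - α ^ k) ^ ((1 : ℝ) / k - 2) := by
  have hfirst : deriv (fun α : ℝ => c * (x - α ^ k) ^ ((1 : ℝ) / k)) =ᶠ[𝓝 α]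
      fun β => -c * β ^ (k - 1) * (x - β ^ k) ^ ((1 : ℝ) / k - 1) := by
    have hopen : IsOpen {β : ℝ | 0 < x - β ^ k} := isOpen_lt continuous_const (by fun_prop)
    filter_upwards [hopen.mem_nhds hα] with β hβ
    exact (hasDerivAt_const_mul_sub_pow_rpow_one_div c x (by omega) hβ).deriv
  rw [hfirst.deriv_eq,
    (((hasDerivAt_pow (k - 1) α).const_mul (-c)).fun_mul
      (hasDerivAt_sub_pow_rpow x ((1 : ℝ) / k - 1) k hα)).deriv]
  have hsplit : (x - α ^ k) ^ ((1 : ℝ) / k - 1) =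
      (x - α ^ k) ^ ((1 : ℝ) / k - 2) * (x - α ^ k) := by
    rw [← rpow_add_one hα.ne']; ring_nf
  obtain ⟨n, rfl⟩ : ∃ n, k = n + 2 := ⟨k - 2, by omega⟩
  rw [hsplit, show (1 : ℝ) / ↑(n + 2) - 1 - 1 = 1 / ↑(n + 2) - 2 by ring]
  simp only [Nat.add_sub_cancel]
  push_cast
  field_simp
  ring

lemma rpow_sub_one_mul_pow_le_mul_pow_mul_rpow_sub_two {x u M α p : ℝ} (n : ℕ) (hM : 0 ≤ M)
    (hMα : M ≤ α) (hx : 0 < x) (hu : 0 < u) (hux : u ≤ x) (hp : p ≤ 2) :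
    x ^ (p - 1) * M ^ n ≤ x * α ^ n * u ^ (p - 2) := by
  have hα : 0 ≤ α := hM.trans hMα
  have hxu : x ^ (p - 2) ≤ u ^ (p - 2) := rpow_le_rpow_of_nonpos hu hux (by linarith)
  have hMα' : M ^ n ≤ α ^ n := pow_le_pow_left₀ hM hMα n
  calc x ^ (p - 1) * M ^ n = x * (M ^ n * x ^ (p - 2)) := by
        rw [show p - 1 = p - 2 + 1 by ring, rpow_add_one hx.ne']; ring
    _ ≤ x * (α ^ n * u ^ (p - 2)) := by gcongr
    _ = x * α ^ n * u ^ (p - 2) := by ring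

lemma mul_pow_mul_rpow_sub_two_le_two_rpow_mul {x u M α p : ℝ} (n : ℕ) (hα : 0 ≤ α)
    (hαM : α ≤ 2 * M) (hx : 0 < x) (hu : x / 2 ≤ u) (hp : p ≤ 2) :
    x * α ^ n * u ^ (p - 2) ≤ 2 ^ ((n : ℝ) + 2 - p) * x ^ (p - 1) * M ^ n := by
  have hM : 0 ≤ M := by linarith
  have hu0 : 0 < u := by linarith
  have hαM' : α ^ n ≤ (2 * M) ^ n := pow_le_pow_left₀ hα hαM n
  have hux : u ^ (p - 2) ≤ (x / 2) ^ (p - 2) :=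
    rpow_le_rpow_of_nonpos (by positivity) hu (by linarith)
  calc x * α ^ n * u ^ (p - 2) ≤ x * (2 * M) ^ n * (x / 2) ^ (p - 2) := by gcongr
    _ = 2 ^ ((n : ℝ) + 2 - p) * x ^ (p - 1) * M ^ n := by
      rw [show (n : ℝ) + 2 - p = n + -(p - 2) by ring, rpow_add two_pos, rpow_natCast,
        rpow_neg zero_le_two, div_rpow hx.le zero_le_two, show p - 1 = p - 2 + 1 by ring,
        rpow_add_one hx.ne']
      field_simp
      ring

lemma mul_pow_mul_sub_pow_rpow_one_div_mem_Icc {k : ℕ} (hk : 2 ≤ k) {x M α : ℝ} (hx : 0 < x)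
    (hM : 0 < M) (hMα : M ≤ α) (hα : α ≤ 2 * M) (hαk : α ^ k ≤ x / 2) :
    x * α ^ (k - 2) * (x - α ^ k) ^ ((1 : ℝ) / k - 2) ∈
      Set.Icc (x ^ ((1 : ℝ) / k - 1) * M ^ (k - 2))
        (2 ^ ((k : ℝ) - 1 / k) * x ^ ((1 : ℝ) / k - 1) * M ^ (k - 2)) := by
  have hp : (1 : ℝ) / k ≤ 2 := by
    rw [div_le_iff₀ (Nat.cast_pos.2 (by omega))]; norm_cast; omega
  have hα0 : 0 ≤ α := hM.le.trans hMα
  have hαk0 : 0 ≤ α ^ k := pow_nonneg hα0 k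
  rw [show (k : ℝ) - 1 / k = ((k - 2 : ℕ) : ℝ) + 2 - 1 / k by rw [Nat.cast_sub hk]; ring]
  exact ⟨rpow_sub_one_mul_pow_le_mul_pow_mul_rpow_sub_two _ hM.le hMα hx (by linarith)
      (by linarith) hp,
    mul_pow_mul_rpow_sub_two_le_two_rpow_mul _ hα0 hα hx (by linarith) hp⟩

theorem stmt6_general (k : ℕ) (hk : 4 ≤ k) (x : ℝ) (hx : 0 < x) (h : ℤ)
    (M : ℝ) (hM : 0 < M) :
    (∀ α ∈ Set.Ioo (0 : ℝ) (x ^ ((1 : ℝ) / k)),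
      deriv (deriv (fun α : ℝ => (h : ℝ) * (x - α ^ k) ^ ((1 : ℝ) / k))) α =
        -((k : ℝ) - 1) * (h : ℝ) * x * α ^ (k - 2) * (x - α ^ k) ^ ((1 : ℝ) / k - 2)) ∧
    ∀ α ∈ Set.Icc M (min (2 * M) ((x / 2) ^ ((1 : ℝ) / k))),
      ((k : ℝ) - 1) * |(h : ℝ)| * x ^ ((1 : ℝ) / k - 1) * M ^ (k - 2) ≤
        |deriv (deriv (fun α : ℝ => (h : ℝ) * (x - α ^ k) ^ ((1 : ℝ) / k))) α| ∧
      |deriv (deriv (fun α : ℝ => (h : ℝ) * (x - α ^ k) ^ ((1 : ℝ) / k))) α| ≤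
        (2 : ℝ) ^ ((k : ℝ) - 1 / (k : ℝ)) * ((k : ℝ) - 1) * |(h : ℝ)| *
          x ^ ((1 : ℝ) / k - 1) * M ^ (k - 2) := by
  have hk0 : k ≠ 0 := by omega
  have hf'' (α : ℝ) :=
    deriv_deriv_const_mul_sub_pow_rpow_one_div (h : ℝ) x (k := k) (by omega) (α := α)
  refine ⟨fun α ⟨hα0, hα⟩ ↦ hf'' α ?_, fun α ⟨hMα, hα⟩ ↦ ?_⟩
  · rw [lt_rpow_one_div_iff_pow_lt hα0.le hx.le hk0] at hα
    linarith
  have hα0 : 0 < α := hM.trans_le hMα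
  rw [le_min_iff, le_rpow_one_div_iff_pow_le hα0.le (by positivity) hk0] at hα
  obtain ⟨hlow, hup⟩ :=
    mul_pow_mul_sub_pow_rpow_one_div_mem_Icc (by omega) hx hM hMα hα.1 hα.2
  set D := x * α ^ (k - 2) * (x - α ^ k) ^ ((1 : ℝ) / k - 2)
  have hc : (0 : ℝ) ≤ (k : ℝ) - 1 := sub_nonneg.2 (mod_cast (by omega : 1 ≤ k))
  have hkh : (0 : ℝ) ≤ ((k : ℝ) - 1) * |(h : ℝ)| := mul_nonneg hc (abs_nonneg _)
  have habs : |-((k : ℝ) - 1) * h * x * α ^ (k - 2) * (x - α ^ k) ^ ((1 : ℝ) / k - 2)| =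
      ((k : ℝ) - 1) * |(h : ℝ)| * D := by
    rw [show -((k : ℝ) - 1) * h * x * α ^ (k - 2) * (x - α ^ k) ^ ((1 : ℝ) / k - 2) =
      -(((k : ℝ) - 1) * h * D) by ring, abs_neg, abs_mul, abs_mul,
      abs_of_nonneg (hlow.trans' (by positivity)), abs_of_nonneg hc]
  rw [hf'' α (by linarith), habs]
  exact ⟨(mul_le_mul_of_nonneg_left hlow hkh).trans_eq' (by ring),
    (mul_le_mul_of_nonneg_left hup hkh).trans_eq (by ring)⟩

theorem stmt6 (k : ℕ) (hk : 4 ≤ k) (x : ℝ) (hx : 0 < x) (h : ℤ) (hh : h ≠ 0)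
    (M : ℝ) (hM : 0 < M) (hM' : M ≤ (x / 2) ^ ((1 : ℝ) / k)) :
    (∀ α ∈ Set.Ioo (0 : ℝ) (x ^ ((1 : ℝ) / k)),
      deriv (deriv (fun α : ℝ => (h : ℝ) * (x - α ^ k) ^ ((1 : ℝ) / k))) α =
        -((k : ℝ) - 1) * (h : ℝ) * x * α ^ (k - 2) * (x - α ^ k) ^ ((1 : ℝ) / k - 2)) ∧
    ∀ α ∈ Set.Icc M (min (2 * M) ((x / 2) ^ ((1 : ℝ) / k))),
      ((k : ℝ) - 1) * |(h : ℝ)| * x ^ ((1 : ℝ) / k - 1) * M ^ (k - 2) ≤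
        |deriv (deriv (fun α : ℝ => (h : ℝ) * (x - α ^ k) ^ ((1 : ℝ) / k))) α| ∧
      |deriv (deriv (fun α : ℝ => (h : ℝ) * (x - α ^ k) ^ ((1 : ℝ) / k))) α| ≤
        (2 : ℝ) ^ ((k : ℝ) - 1 / (k : ℝ)) * ((k : ℝ) - 1) * |(h : ℝ)| *
          x ^ ((1 : ℝ) / k - 1) * M ^ (k - 2) :=
  stmt6_general k hk x hx h M hM
end

section
/- For an integer k ≥ 2 and real x > 0, 2∫_0^{(x/2)^{1/k}} (x − α^k)^{1/k} dα − (x/2)^{2/k} = ∫_0^{x^{1/k}} (x − α^k)^{1/k} dα = (1/k) B(1/k, 1/k + 1) x^{2/k}, where B is the Beta function. -/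
open Real intervalIntegral Set

/-!
The curve `Y = (x - X ^ k) ^ (1 / k)` is the graph of a decreasing involution `g` of
`[0, x ^ (1 / k)]` with fixed point `c = (x / 2) ^ (1 / k)`. Substituting `α = g β` and then
integrating by parts gives `∫ c..g 0, g = ∫ 0..c, g - c ^ 2`: the region `X ≥ c` is the mirror
image of the region `Y ≥ c`. This is the first identity. For the second, the scaling
`α = x ^ (1 / k) t` and the substitution `u = t ^ k` turn the integral into
`x ^ (2 / k) / k * ∫ 0..1, u ^ (1 / k - 1) * (1 - u) ^ (1 / k)`, a Beta integral.
-/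

theorem two_mul_integral_sub_sq_eq_integral_of_involutive {g g' : ℝ → ℝ} {c : ℝ}
    (hg : Continuous g) (hderiv : ∀ β ∈ uIcc 0 c, HasDerivAt g (g' β) β)
    (hg' : ContinuousOn g' (uIcc 0 c)) (hinv : ∀ β ∈ uIcc 0 c, g (g β) = β) (hc : g c = c) :
    2 * (∫ α in 0..c, g α) - c ^ 2 = ∫ α in 0..g 0, g α := by
  have hsubst : ∫ β in 0..c, (g ∘ g) β * g' β = ∫ α in g 0..c, g α := by
    rw [integral_comp_mul_deriv hderiv hg' hg, hc]
  have hparts : ∫ β in 0..c, β * g' β = c * g c - 0 * g 0 - ∫ β in 0..c, 1 * g β :=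
    integral_mul_deriv_eq_deriv_mul (fun β _ => hasDerivAt_id β) hderiv
      intervalIntegrable_const hg'.intervalIntegrable
  have hupper : ∫ α in c..g 0, g α = (∫ α in 0..c, g α) - c ^ 2 := by
    rw [integral_symm, ← hsubst,
      integral_congr fun β hβ => by rw [Function.comp_apply, hinv β hβ], hparts, hc]
    simp only [zero_mul, one_mul]
    ring
  rw [← integral_add_adjacent_intervals (hg.intervalIntegrable 0 c)
    (hg.intervalIntegrable c (g 0)), hupper]
  ring

theorem sub_pow_rpow_one_div_involutive {k : ℕ} (hk : k ≠ 0) {x α : ℝ} (hα : 0 ≤ α)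
    (hαx : α ^ k ≤ x) : (x - ((x - α ^ k) ^ ((1 : ℝ) / k)) ^ k) ^ ((1 : ℝ) / k) = α := by
  rw [one_div, rpow_inv_natCast_pow (sub_nonneg.2 hαx) hk, sub_sub_cancel,
    pow_rpow_inv_natCast hα hk]

theorem two_mul_integral_sub_pow_rpow_half {k : ℕ} (hk : k ≠ 0) {x : ℝ} (hx : 0 < x) :
    2 * (∫ α in 0..(x / 2) ^ ((1 : ℝ) / k), (x - α ^ k) ^ ((1 : ℝ) / k)) -
        (x / 2) ^ ((2 : ℝ) / k) =
      ∫ α in 0..x ^ ((1 : ℝ) / k), (x - α ^ k) ^ ((1 : ℝ) / k) := by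
  set c := (x / 2) ^ ((1 : ℝ) / k) with hc_def
  have hc : 0 ≤ c := by positivity
  have hck : c ^ k = x / 2 := by rw [hc_def, one_div, rpow_inv_natCast_pow (by positivity) hk]
  have hbound : ∀ β ∈ uIcc 0 c, 0 ≤ β ∧ β ^ k ≤ x / 2 := fun β hβ => by
    rw [uIcc_of_le hc] at hβ
    exact ⟨hβ.1, hck ▸ pow_le_pow_left₀ hβ.1 hβ.2 k⟩
  have hne : ∀ β ∈ uIcc 0 c, x - β ^ k ≠ 0 := fun β hβ => by linarith [(hbound β hβ).2]
  have hderiv : ∀ β ∈ uIcc 0 c, HasDerivAt (fun α : ℝ => (x - α ^ k) ^ ((1 : ℝ) / k))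
      (-(k * β ^ (k - 1)) * (1 / k) * (x - β ^ k) ^ ((1 : ℝ) / k - 1)) β := fun β hβ =>
    ((hasDerivAt_pow k β).const_sub x).rpow_const (Or.inl (hne β hβ))
  have hderiv_cont : ContinuousOn
      (fun β : ℝ => -(k * β ^ (k - 1)) * (1 / k) * (x - β ^ k) ^ ((1 : ℝ) / k - 1))
      (uIcc 0 c) := fun β hβ =>
    (ContinuousAt.mul (by fun_prop)
      ((continuous_const.sub (continuous_pow k)).continuousAt.rpow_const
        (Or.inl (hne β hβ)))).continuousWithinAt
  have hfixed : (x - c ^ k) ^ ((1 : ℝ) / k) = c := by rw [hck, show x - x / 2 = x / 2 by ring]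
  have hsq : c ^ 2 = (x / 2) ^ ((2 : ℝ) / k) := by
    rw [hc_def, ← rpow_natCast, ← rpow_mul (by positivity)]
    congr 1
    push_cast
    ring
  rw [← hsq]
  convert two_mul_integral_sub_sq_eq_integral_of_involutive
    (g := fun α : ℝ => (x - α ^ k) ^ ((1 : ℝ) / k))
    ((continuous_const.sub (continuous_pow k)).rpow_const fun _ => Or.inr (by positivity))
    hderiv hderiv_cont
    (fun β hβ => sub_pow_rpow_one_div_involutive hk (hbound β hβ).1
      (by linarith [(hbound β hβ).2]))
    hfixed using 2
  simp [zero_pow hk]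

theorem ProbabilityTheory.beta_eq_integral {a b : ℝ} (ha : 0 < a) (hb : 0 < b) :
    beta a b = ∫ t in 0..1, t ^ (a - 1) * (1 - t) ^ (b - 1) := by
  rw [beta_eq_betaIntegralReal a b ha hb, Complex.betaIntegral,
    ← Complex.ofReal_re (∫ t in (0 : ℝ)..1, _), ← integral_ofReal]
  congr 1
  refine integral_congr_ae (Filter.Eventually.of_forall fun t ht => ?_)
  rw [uIoc_of_le zero_le_one] at ht
  push_cast
  rw [Complex.ofReal_cpow ht.1.le, Complex.ofReal_cpow (by linarith [ht.2])]
  push_cast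
  ring_nf

theorem pow_rpow_one_div_sub_one_mul_natCast_mul_pow {k : ℕ} (hk : k ≠ 0) {t : ℝ}
    (ht : 0 < t) :
    (t ^ k) ^ ((1 : ℝ) / k - 1) * (k * t ^ (k - 1)) = k := by
  rw [rpow_sub (pow_pos ht k), rpow_one, one_div, pow_rpow_inv_natCast ht.le hk,
    ← pow_sub_one_mul hk t]
  field_simp

theorem integral_one_sub_pow_rpow {k : ℕ} (hk : k ≠ 0) {p : ℝ} (hp : -1 < p) :
    ∫ t in 0..1, (1 - t ^ k) ^ p = 1 / k * ProbabilityTheory.beta (1 / k) (p + 1) := by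
  have hsubst :
      ∫ t in 0..1, (t ^ k) ^ ((1 : ℝ) / k - 1) * (1 - t ^ k) ^ p * (k * t ^ (k - 1)) =
        ∫ u in 0..1, u ^ ((1 : ℝ) / k - 1) * (1 - u) ^ p := by
    simpa [zero_pow hk] using integral_comp_mul_deriv_of_deriv_nonneg (a := 0) (b := 1)
      (g := fun u => u ^ ((1 : ℝ) / k - 1) * (1 - u) ^ p) (continuous_pow k).continuousOn
      (fun t _ => hasDerivAt_pow k t) (fun t ht => by simp at ht; have := ht.1.le; positivity)
  have hk' : (k : ℝ) ≠ 0 := by exact_mod_cast hk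
  rw [ProbabilityTheory.beta_eq_integral (by positivity) (by linarith), add_sub_cancel_right,
    ← hsubst, ← integral_const_mul]
  refine integral_congr_ae (Filter.Eventually.of_forall fun t ht => ?_)
  rw [uIoc_of_le zero_le_one] at ht
  rw [mul_right_comm, pow_rpow_one_div_sub_one_mul_natCast_mul_pow hk ht.1]
  field_simp

theorem integral_sub_pow_rpow_eq_rpow_mul_integral {k : ℕ} (hk : k ≠ 0) {x : ℝ} (hx : 0 < x)
    (p : ℝ) :
    ∫ α in 0..x ^ ((1 : ℝ) / k), (x - α ^ k) ^ p =
      x ^ (p + 1 / k) * ∫ t in 0..1, (1 - t ^ k) ^ p := by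
  set r := x ^ ((1 : ℝ) / k) with hr_def
  have hr : 0 < r := by positivity
  have hrk : r ^ k = x := by rw [hr_def, one_div, rpow_inv_natCast_pow hx.le hk]
  have hscale : ∫ t in 0..1, (x - (r * t) ^ k) ^ p = x ^ p * ∫ t in 0..1, (1 - t ^ k) ^ p := by
    rw [← integral_const_mul]
    refine integral_congr fun t ht => ?_
    rw [uIcc_of_le zero_le_one] at ht
    rw [mul_pow, hrk, ← mul_rpow hx.le (sub_nonneg.2 (pow_le_one₀ ht.1 ht.2)), mul_sub, mul_one]
  rw [integral_comp_mul_left (fun α => (x - α ^ k) ^ p) hr.ne', mul_zero, mul_one,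
    smul_eq_mul] at hscale
  rw [rpow_add hx, mul_right_comm, ← hscale, hr_def]
  field_simp

theorem stmt9 (k : ℕ) (hk : 2 ≤ k) (x : ℝ) (hx : 0 < x) :
    (2 * (∫ α in (0 : ℝ)..((x / 2) ^ ((1 : ℝ) / k)), (x - α ^ k) ^ ((1 : ℝ) / k)) -
        (x / 2) ^ ((2 : ℝ) / k) =
      ∫ α in (0 : ℝ)..(x ^ ((1 : ℝ) / k)), (x - α ^ k) ^ ((1 : ℝ) / k)) ∧
    (∫ α in (0 : ℝ)..(x ^ ((1 : ℝ) / k)), (x - α ^ k) ^ ((1 : ℝ) / k)) =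
      1 / (k : ℝ) * (Real.Gamma (1 / (k : ℝ)) * Real.Gamma (1 / (k : ℝ) + 1) /
        Real.Gamma (1 / (k : ℝ) + (1 / (k : ℝ) + 1))) * x ^ ((2 : ℝ) / k) := by
  have hk₀ : k ≠ 0 := by omega
  have hp : (-1 : ℝ) < 1 / k := neg_one_lt_zero.trans (by positivity)
  refine ⟨two_mul_integral_sub_pow_rpow_half hk₀ hx, ?_⟩
  rw [integral_sub_pow_rpow_eq_rpow_mul_integral hk₀ hx, integral_one_sub_pow_rpow hk₀ hp,
    show (1 : ℝ) / k + 1 / k = 2 / k by ring]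
  unfold ProbabilityTheory.beta
  ring
end
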